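/- The function f(x) = x·e^{√(1−x²)}/(1+√(1−x²)) is monotonically increasing on [0,1) and satisfies 0 ≤ f(x) < 1 for all x ∈ [0,1). -/

import Mathlib

open MeasureTheory Filter Finset
open scoped Real RealInnerProductSpace ComplexConjugate

noncomputable section

/-- `ℝ³` as a Euclidean space. -/
abbrev E3 : Type := EuclideanSpace ℝ (Fin 3)
/-- `ℂ³` as a Euclidean (Hilbert) space. -/
abbrev C3 : Type := EuclideanSpace ℂ (Fin 3)
/-- The unit sphere `S² ⊂ ℝ³`. -/
abbrev S2 : Type := Metric.sphere (0 : E3) 1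

/-- The surface measure on the unit sphere `S²`. -/
def sphereMeasure : Measure S2 := (volume : Measure E3).toSphere

/-- The Bessel function of the first kind of real order `ν`, via its power series. -/
def besselJ (ν x : ℝ) : ℝ :=
  ∑' m : ℕ, ((-1 : ℝ) ^ m / (m.factorial * Real.Gamma (m + ν + 1))) *
    (x / 2) ^ (2 * m) * Real.rpow (x / 2) ν

/-- Siegel's comparison function `f(x) = x e^{√(1-x²)} / (1 + √(1-x²))`. -/
def siegelF (x : ℝ) : ℝ :=
  x * Real.exp (Real.sqrt (1 - x ^ 2)) / (1 + Real.sqrt (1 - x ^ 2))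

/-- The spherical Bessel function of the first kind of degree `ℓ`,
`j_ℓ(u) = √(π/(2u)) J_{ℓ+1/2}(u)`, extended by continuity at `u = 0`. -/
def sBesselJ (ℓ : ℕ) (u : ℝ) : ℝ :=
  if u = 0 then (if ℓ = 0 then 1 else 0)
  else Real.sqrt (Real.pi / (2 * u)) * besselJ ((ℓ : ℝ) + 1 / 2) u

/-- The Legendre polynomial of degree `ℓ` (Rodrigues' formula). -/
def legendreP (ℓ : ℕ) (x : ℝ) : ℝ :=
  (1 / ((2 : ℝ) ^ ℓ * ℓ.factorial)) *
    iteratedDeriv ℓ (fun t : ℝ => (t ^ 2 - 1) ^ ℓ) x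

/-- Associated Legendre function `P_ℓ^n` for natural order `n` (Condon–Shortley phase). -/
def assocLegendreNat (ℓ n : ℕ) (x : ℝ) : ℝ :=
  (-1 : ℝ) ^ n * Real.rpow (1 - x ^ 2) ((n : ℝ) / 2) *
    iteratedDeriv n (legendreP ℓ) x

/-- Associated Legendre function `P_ℓ^m` for integer order `m`. -/
def assocLegendre (ℓ : ℕ) (m : ℤ) (x : ℝ) : ℝ :=
  if 0 ≤ m then assocLegendreNat ℓ m.toNat x
  else (-1 : ℝ) ^ (-m).toNat *
    ((ℓ - (-m).toNat).factorial : ℝ) / ((ℓ + (-m).toNat).factorial : ℝ) *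
    assocLegendreNat ℓ (-m).toNat x

/-- The (complex, orthonormal) scalar spherical harmonic `Y_ℓ^m`, defined on `ℝ³ \ {0}`
as a degree-zero homogeneous function (so its restriction to `S²` is the usual one). -/
def sphericalHarmonic (ℓ : ℕ) (m : ℤ) (v : E3) : ℂ :=
  (Real.sqrt ((2 * ℓ + 1) / (4 * Real.pi) *
      ((((ℓ : ℤ) - m).toNat.factorial : ℝ) / (((ℓ : ℤ) + m).toNat.factorial : ℝ))) : ℂ) *
    (assocLegendre ℓ m (v 2 / ‖v‖) : ℂ) *
    Complex.exp (Complex.I * (m : ℂ) * (Complex.arg ((v 0 : ℂ) + (v 1 : ℂ) * Complex.I) : ℂ))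

/-- Embedding of a real vector into `ℂ³`. -/
def realToC3 (v : E3) : C3 := (WithLp.equiv 2 (Fin 3 → ℂ)).symm fun i => (v i : ℂ)

/-- Cross product on `ℂ³`. -/
def crossC (a b : C3) : C3 :=
  (WithLp.equiv 2 (Fin 3 → ℂ)).symm
    ![a 1 * b 2 - a 2 * b 1, a 2 * b 0 - a 0 * b 2, a 0 * b 1 - a 1 * b 0]

/-- Gradient of the (degree-zero homogeneously extended) spherical harmonic `Y_ℓ^m`,
as a vector in `ℂ³`. -/
def gradSH (ℓ : ℕ) (m : ℤ) (v : E3) : C3 :=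
  (WithLp.equiv 2 (Fin 3 → ℂ)).symm fun i =>
    fderiv ℝ (sphericalHarmonic ℓ m) v (EuclideanSpace.single i 1)

/-- Radial vector spherical harmonic `Y_ℓ^m(r̂) r̂`. -/
def vshY (ℓ : ℕ) (m : ℤ) (v : E3) : C3 := sphericalHarmonic ℓ m v • realToC3 v

/-- Tangential vector spherical harmonic `Ψ_ℓ^m = r ∇Y_ℓ^m`. -/
def vshPsi (ℓ : ℕ) (m : ℤ) (v : E3) : C3 := ‖v‖ • gradSH ℓ m v

/-- Tangential vector spherical harmonic `Φ_ℓ^m = r̂ × ∇Y_ℓ^m` (on the unit sphere). -/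
def vshPhi (ℓ : ℕ) (m : ℤ) (v : E3) : C3 := crossC (realToC3 v) (gradSH ℓ m v)

/-- The orthogonal projection `I₃ - r̂ r̂ᵀ` onto the plane perpendicular to `v`,
applied to a complex vector. -/
def tangentProj (v : E3) (w : C3) : C3 :=
  w - (∑ i : Fin 3, (v i : ℂ) * w i) • realToC3 v

/-- The exponent `β(L) = -ln f(ka/(L+1/2))` appearing in the super-exponential decay. -/
def betaFn (a k : ℝ) (L : ℕ) : ℝ := - Real.log (siegelF (k * a / ((L : ℝ) + 1 / 2)))

end

/-! With `s = √(1 - x²)` the derivative of `siegelF` collapses to `s eˢ / (1 + s)`, which is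
positive on `(-1, 1)`; so `siegelF` is strictly increasing on `[-1, 1]`, where it climbs to
`siegelF 1 = 1`. -/

theorem siegelF_hasDerivAt {x : ℝ} (hx : x ∈ Set.Ioo (-1 : ℝ) 1) :
    HasDerivAt siegelF (√(1 - x ^ 2) * Real.exp √(1 - x ^ 2) / (1 + √(1 - x ^ 2))) x := by
  have hpos : 0 < 1 - x ^ 2 := by nlinarith [hx.1, hx.2]
  set s := √(1 - x ^ 2)
  have hs_pos : 0 < s := Real.sqrt_pos.mpr hpos
  have hs_sq : s ^ 2 = 1 - x ^ 2 := Real.sq_sqrt hpos.le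
  have hsqrt : HasDerivAt (fun y : ℝ => √(1 - y ^ 2)) (-(2 * x) / (2 * s)) x := by
    simpa using ((hasDerivAt_pow 2 x).const_sub 1).sqrt hpos.ne'
  have hquot : HasDerivAt siegelF
      (((1 * Real.exp s + x * (Real.exp s * (-(2 * x) / (2 * s)))) * (1 + s) -
        x * Real.exp s * (-(2 * x) / (2 * s))) / (1 + s) ^ 2) x :=
    ((hasDerivAt_id' x).mul hsqrt.exp).div (hsqrt.const_add 1) (by positivity)
  refine hquot.congr_deriv ?_
  field_simp
  linear_combination (-s) * hs_sq

theorem siegelF_continuous : Continuous siegelF := by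
  unfold siegelF
  refine Continuous.div (by fun_prop) (by fun_prop) fun x => ?_
  positivity

theorem siegelF_strictMonoOn : StrictMonoOn siegelF (Set.Icc (-1 : ℝ) 1) := by
  refine strictMonoOn_of_deriv_pos (convex_Icc _ _) siegelF_continuous.continuousOn fun x hx => ?_
  rw [interior_Icc] at hx
  have hs : 0 < √(1 - x ^ 2) := Real.sqrt_pos.mpr (by nlinarith [hx.1, hx.2])
  rw [(siegelF_hasDerivAt hx).deriv]
  positivity

theorem siegelF_one : siegelF 1 = 1 := by
  simp [siegelF]

theorem siegelF_nonneg {x : ℝ} (hx : 0 ≤ x) : 0 ≤ siegelF x := by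
  unfold siegelF
  positivity

/-- `f(x) = x e^{√(1-x²)}/(1+√(1-x²))` is monotonically increasing on `[0,1)`
and satisfies `0 ≤ f(x) < 1` there. -/
theorem siegelF_monotoneOn_and_lt_one :
    MonotoneOn siegelF (Set.Ico (0 : ℝ) 1) ∧
      ∀ x ∈ Set.Ico (0 : ℝ) 1, 0 ≤ siegelF x ∧ siegelF x < 1 := by
  have hIco : Set.Ico (0 : ℝ) 1 ⊆ Set.Icc (-1) 1 := fun x hx => ⟨by linarith [hx.1], hx.2.le⟩
  refine ⟨siegelF_strictMonoOn.monotoneOn.mono hIco, fun x hx => ⟨siegelF_nonneg hx.1, ?_⟩⟩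
  calc siegelF x < siegelF 1 := siegelF_strictMonoOn (hIco hx) (by norm_num) hx.2
    _ = 1 := siegelF_one
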